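/- Let R → S be a homomorphism of commutative rings and C a contraadjusted S-module. Then the underlying R-module of C (via restriction of scalars) is a contraadjusted R-module. -/

import Mathlib

open CategoryTheory Opposite

/-- An `A`-module `C` over a commutative ring `A` is contraadjusted if
`Ext¹_A(A[t⁻¹], C) = 0` for all `t ∈ A`. -/
def Contraadjusted (A : Type) [CommRing A] (C : Type) [AddCommGroup C] [Module A C] : Prop :=
  ∀ t : A, Subsingleton (((Ext A (ModuleCat A) 1).obj
    (op (ModuleCat.of A (Localization.Away t)))).obj (ModuleCat.of A C))

open CategoryTheory Opposite Finsupp CategoryTheory.Limits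


noncomputable section Tele

variable {A : Type} [CommRing A] (t : A)

/-- shift: `e n ↦ e (n+1)` -/
def shiftL : (ℕ →₀ A) →ₗ[A] (ℕ →₀ A) := Finsupp.lmapDomain A A (· + 1)

def dL : (ℕ →₀ A) →ₗ[A] (ℕ →₀ A) := LinearMap.id - t • shiftL

def eL : (ℕ →₀ A) →ₗ[A] Localization.Away t :=
  Finsupp.lift (Localization.Away t) A ℕ (fun n => IsLocalization.Away.invSelf t ^ n)

lemma shiftL_apply (x : ℕ →₀ A) (n : ℕ) : shiftL x (n + 1) = x n := by
  simpa [shiftL] using Finsupp.mapDomain_apply (add_left_injective 1) x n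

lemma shiftL_apply_zero (x : ℕ →₀ A) : shiftL x 0 = 0 := by
  refine Finsupp.mapDomain_notin_range _ _ ?_
  rintro ⟨m, hm⟩
  simp only at hm
  omega

lemma dL_apply_zero (x : ℕ →₀ A) : dL t x 0 = x 0 := by
  simp [dL, shiftL_apply_zero]

lemma dL_apply_succ (x : ℕ →₀ A) (n : ℕ) : dL t x (n + 1) = x (n + 1) - t * x n := by
  simp [dL, shiftL_apply]

lemma dL_injective : Function.Injective (dL t) := by
  intro x y h
  ext n
  induction n with
  | zero =>
      have := congrArg (fun z => z 0) h
      simpa [dL_apply_zero] using this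
  | succ n ih =>
      have := congrArg (fun z => z (n + 1)) h
      simp only [dL_apply_succ] at this
      have : x (n+1) - t * x n = y (n+1) - t * y n := this
      rw [ih] at this
      exact sub_left_inj.mp this

lemma eL_single (n : ℕ) (a : A) :
    eL t (Finsupp.single n a) = a • IsLocalization.Away.invSelf t ^ n := by
  simp [eL]

lemma pow_mul_invSelf_pow (n : ℕ) :
    (algebraMap A (Localization.Away t)) t ^ n * IsLocalization.Away.invSelf t ^ n = 1 := by
  rw [← mul_pow, IsLocalization.Away.mul_invSelf, one_pow]

lemma eL_comp_dL (x : ℕ →₀ A) : eL t (dL t x) = 0 := by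
  suffices h : ∀ n a, eL t (dL t (Finsupp.single n a)) = 0 by
    induction x using Finsupp.induction with
    | zero => simp
    | single_add n a f _ _ ih => rw [map_add, map_add, ih, add_zero, h]
  intro n a
  have hsingle : dL t (Finsupp.single n a) =
      Finsupp.single n a - t • Finsupp.single (n+1) a := by
    simp [dL, shiftL, Finsupp.mapDomain_single]
  rw [hsingle, map_sub, map_smul, eL_single, eL_single, smul_comm t a, sub_eq_zero]
  congr 1
  rw [Algebra.smul_def, pow_succ', ← mul_assoc, IsLocalization.Away.mul_invSelf, one_mul]

lemma eL_surjective : Function.Surjective (eL t) := by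
  intro z
  obtain ⟨n, a, h⟩ := IsLocalization.Away.surj (S := Localization.Away t) t z
  refine ⟨Finsupp.single n a, ?_⟩
  rw [eL_single, Algebra.smul_def, ← h, mul_assoc, pow_mul_invSelf_pow, mul_one]

/-- partial sums -/
def yseq (x : ℕ →₀ A) (n : ℕ) : A := ∑ k ∈ Finset.range (n+1), t ^ (n - k) * x k

lemma yseq_zero (x : ℕ →₀ A) : yseq t x 0 = x 0 := by simp [yseq]

lemma yseq_succ (x : ℕ →₀ A) (n : ℕ) :
    yseq t x (n+1) = t * yseq t x n + x (n+1) := by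
  rw [yseq, Finset.sum_range_succ, Nat.sub_self, pow_zero, one_mul, yseq, Finset.mul_sum]
  congr 1
  apply Finset.sum_congr rfl
  intro k hk
  rw [Finset.mem_range] at hk
  rw [← mul_assoc, ← pow_succ']
  congr 2
  omega

lemma algebraMap_yseq (x : ℕ →₀ A) (N : ℕ) (hN : ∀ k, N < k → x k = 0) :
    algebraMap A (Localization.Away t) (yseq t x N) =
      algebraMap A (Localization.Away t) t ^ N * eL t x := by
  have hx : eL t x = ∑ k ∈ Finset.range (N+1), x k • IsLocalization.Away.invSelf t ^ k := by
    rw [eL, Finsupp.lift_apply]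
    apply Finsupp.sum_of_support_subset
    · intro k hk
      rw [Finset.mem_range]
      by_contra h
      exact (Finsupp.mem_support_iff.mp hk) (hN k (by omega))
    · intro k _; simp
  rw [hx, Finset.mul_sum, yseq, map_sum]
  apply Finset.sum_congr rfl
  intro k hk
  rw [Finset.mem_range] at hk
  have hsplit : (algebraMap A (Localization.Away t)) t ^ N =
      (algebraMap A (Localization.Away t)) t ^ (N - k) *
        (algebraMap A (Localization.Away t)) t ^ k := by
    rw [← pow_add]; congr 1; omega
  have h2 : (algebraMap A (Localization.Away t)) t ^ k *
      (x k • IsLocalization.Away.invSelf t ^ k) = algebraMap A (Localization.Away t) (x k) := by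
    rw [Algebra.smul_def, mul_left_comm, pow_mul_invSelf_pow, mul_one]
  rw [hsplit, mul_assoc, h2, map_mul, map_pow]

lemma dL_range_of_eL_eq_zero (x : ℕ →₀ A) (hx : eL t x = 0) :
    ∃ Y : ℕ →₀ A, dL t Y = x := by
  obtain ⟨N, hN⟩ : ∃ N, ∀ k, N < k → x k = 0 := by
    rcases x.support.eq_empty_or_nonempty with h | h
    · exact ⟨0, fun k _ => Finsupp.notMem_support_iff.mp (by simp [h])⟩
    · refine ⟨x.support.max' h, fun k hk => ?_⟩
      by_contra hc
      exact absurd (x.support.le_max' k (Finsupp.mem_support_iff.mpr hc)) (by omega)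
  have h0 : algebraMap A (Localization.Away t) (yseq t x N) = 0 := by
    rw [algebraMap_yseq t x N hN, hx, mul_zero]
  obtain ⟨⟨c, m, rfl⟩, hm⟩ := (IsLocalization.map_eq_zero_iff (Submonoid.powers t) _ _).mp h0
  -- t ^ m * yseq N = 0
  have hpow : ∀ j, yseq t x (N + j) = t ^ j * yseq t x N := by
    intro j
    induction j with
    | zero => simp
    | succ j ih =>
        rw [← Nat.add_assoc, yseq_succ, ih, hN _ (by omega), add_zero, pow_succ', mul_assoc]
  have hvanish : ∀ n, N + m ≤ n → yseq t x n = 0 := by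
    intro n hn
    obtain ⟨j, rfl⟩ : ∃ j, n = N + (m + j) := ⟨n - N - m, by omega⟩
    rw [hpow, pow_add, mul_assoc]
    rw [mul_comm (t ^ j), ← mul_assoc]
    simp only at hm
    rw [mul_comm (t ^ m)] at hm ⊢
    rw [hm, zero_mul]
  refine ⟨Finsupp.onFinset (Finset.range (N + m + 1)) (yseq t x) ?_, ?_⟩
  · intro n hn
    rw [Finset.mem_range]
    by_contra h
    exact hn (hvanish n (by omega))
  · ext n
    cases n with
    | zero => rw [dL_apply_zero]; simpa using yseq_zero t x
    | succ n =>
        rw [dL_apply_succ]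
        show yseq t x (n+1) - t * yseq t x n = x (n+1)
        rw [yseq_succ]; ring

end Tele


noncomputable section Cat

variable (A : Type) [CommRing A] (t : A)

lemma subsingleton_of_isZero {M : ModuleCat A} (h : IsZero M) : Subsingleton M := by
  refine ⟨fun a b => ?_⟩
  have hid : (𝟙 M : M ⟶ M) = 0 := by
    have := h.eq_of_src (𝟙 M) 0
    exact this
  calc a = (𝟙 M : M ⟶ M) a := rfl
  _ = (0 : M ⟶ M) a := by rw [hid]
  _ = (𝟙 M : M ⟶ M) b := by rw [hid]; rfl
  _ = b := rfl

instance : Projective (ModuleCat.of A PUnit) := by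
  constructor
  intro E X f e he
  refine ⟨0, ?_⟩
  ext x
  rw [Subsingleton.elim x 0]
  simp

instance : Projective (ModuleCat.of A (ℕ →₀ A)) :=
  ModuleCat.projective_of_free (M := ModuleCat.of A (ℕ →₀ A)) Finsupp.basisSingleOne

def teleX : ℕ → ModuleCat A
  | 0 => ModuleCat.of A (ℕ →₀ A)
  | 1 => ModuleCat.of A (ℕ →₀ A)
  | _+2 => ModuleCat.of A PUnit

def teled : ∀ n : ℕ, teleX A (n+1) ⟶ teleX A n
  | 0 => ModuleCat.ofHom (dL t)
  | _+1 => 0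

def teleComplex : ChainComplex (ModuleCat A) ℕ :=
  ChainComplex.of (teleX A) (teled A t) (by rintro (_|n) <;> simp [teled] <;> exact Limits.zero_comp)

instance (n : ℕ) : Projective ((teleComplex A t).X n) := by
  obtain (_ | _ | n) := n <;> dsimp [teleComplex, teleX] <;> infer_instance

lemma teleComplex_d_1_0 : (teleComplex A t).d 1 0 = ModuleCat.ofHom (dL t) := by
  simp only [teleComplex, ChainComplex.of_d]
  rfl

lemma teleComplex_d_succ (n : ℕ) : (teleComplex A t).d (n+2) (n+1) = 0 := by
  exact (ChainComplex.of_d _ _ (n+1)).trans rfl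

def telePi : teleComplex A t ⟶ (ChainComplex.single₀ (ModuleCat A)).obj
    (ModuleCat.of A (Localization.Away t)) :=
  (ChainComplex.toSingle₀Equiv _ _).symm ⟨ModuleCat.ofHom (eL t), by
    rw [teleComplex_d_1_0]
    ext x
    exact eL_comp_dL t x⟩

lemma telePi_f_zero : (telePi A t).f 0 = ModuleCat.ofHom (eL t) := by
  exact ChainComplex.toSingle₀Equiv_symm_apply_f_zero _ _

end Cat

noncomputable section Res
open CategoryTheory.ProjectiveResolution
variable (A : Type) [CommRing A] (t : A)

lemma teleExact : (ShortComplex.mk (ModuleCat.ofHom (dL t)) (ModuleCat.ofHom (eL t))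
    (by ext1; exact LinearMap.ext (eL_comp_dL t))).Exact := by
  rw [ShortComplex.moduleCat_exact_iff]
  intro x hx
  exact dL_range_of_eL_eq_zero t x hx

lemma teleComplex_exactAt_succ (n : ℕ) : (teleComplex A t).ExactAt (n + 1) := by
  rw [HomologicalComplex.exactAt_iff' _ (n + 1 + 1) (n + 1) n (by simp) (by simp)]
  match n with
  | 0 =>
    rw [ShortComplex.moduleCat_exact_iff]
    intro x hx
    dsimp [HomologicalComplex.sc', HomologicalComplex.shortComplexFunctor'] at x hx ⊢
    rw [teleComplex_d_1_0] at hx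
    have : x = 0 := by
      apply dL_injective t
      exact hx.trans (map_zero (dL t)).symm
    exact ⟨0, by rw [this]; exact map_zero _⟩
  | n + 1 =>
    exact ShortComplex.exact_of_isZero_X₂ _
      (ModuleCat.isZero_of_subsingleton (ModuleCat.of A PUnit))

def teleRes : ProjectiveResolution (ModuleCat.of A (Localization.Away t)) where
  complex := teleComplex A t
  π := telePi A t
  quasiIso := ⟨fun n => by
    cases n with
    | zero =>
      rw [ChainComplex.quasiIsoAt₀_iff, ShortComplex.quasiIso_iff_of_zeros']
      · refine (ShortComplex.exact_and_epi_g_iff_of_iso ?_).2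
          ⟨teleExact A t, (ModuleCat.epi_iff_surjective _).mpr (eL_surjective t)⟩
        refine ShortComplex.isoMk (Iso.refl _) (Iso.refl _) (Iso.refl _) ?_ ?_
        · dsimp
          exact (Category.id_comp _).trans ((teleComplex_d_1_0 A t).symm.trans (Category.comp_id _).symm)
        · dsimp
          exact (Category.id_comp _).trans ((telePi_f_zero A t).symm.trans (Category.comp_id _).symm)
      all_goals rfl
    | succ n =>
      rw [quasiIsoAt_iff_exactAt']
      · apply teleComplex_exactAt_succ
      · apply ChainComplex.exactAt_succ_single_obj⟩

end Res

section ExtIff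
variable (A : Type) [CommRing A] (t : A) (C : Type) [AddCommGroup C] [Module A C]

lemma dL_single (n : ℕ) (a : A) :
    dL t (Finsupp.single n a) = Finsupp.single n a - t • Finsupp.single (n+1) a := by
  simp [dL, shiftL, Finsupp.mapDomain_single]

lemma key_comp (b : ℕ → C) :
    (Finsupp.lift C A ℕ b).comp (dL t) =
      Finsupp.lift C A ℕ (fun n => b n - t • b (n + 1)) := by
  apply Finsupp.lhom_ext
  intro n a
  simp only [LinearMap.comp_apply, dL_single, map_sub, map_smul]
  simp only [Finsupp.lift_apply, Finsupp.sum_single_index, zero_smul]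
  rw [smul_comm t a, smul_sub]

lemma surj_comp_iff :
    Function.Surjective (fun ψ : (ℕ →₀ A) →ₗ[A] C => ψ.comp (dL t)) ↔
      Function.Surjective (fun (b : ℕ → C) (n : ℕ) => b n - t • b (n + 1)) := by
  constructor
  · intro h c
    obtain ⟨ψ, hψ⟩ := h (Finsupp.lift C A ℕ c)
    refine ⟨(Finsupp.lift C A ℕ).symm ψ, ?_⟩
    apply (Finsupp.lift C A ℕ).injective
    rw [← key_comp A t C ((Finsupp.lift C A ℕ).symm ψ), AddEquiv.apply_symm_apply]
    exact hψ
  · intro h φ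
    obtain ⟨b, hb⟩ := h ((Finsupp.lift C A ℕ).symm φ)
    refine ⟨Finsupp.lift C A ℕ b, ?_⟩
    show (Finsupp.lift C A ℕ b).comp (dL t) = φ
    rw [key_comp A t C b]
    have : (fun n => b n - t • b (n+1)) = (Finsupp.lift C A ℕ).symm φ := hb
    rw [this, AddEquiv.apply_symm_apply]

lemma subsingleton_ext_iff :
    Subsingleton (((Ext A (ModuleCat A) 1).obj
        (op (ModuleCat.of A (Localization.Away t)))).obj (ModuleCat.of A C)) ↔
      Function.Surjective (fun (b : ℕ → C) (n : ℕ) => b n - t • b (n + 1)) := by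
  have iso := (teleRes A t).isoExt (R := A) 1 (ModuleCat.of A C)
  refine Iff.trans (Equiv.subsingleton_congr ((forget (ModuleCat A)).mapIso iso).toEquiv) ?_
  have h2 : Subsingleton (((teleRes A t).complex.linearYonedaObj A (ModuleCat.of A C)).homology 1)
      ↔ (((teleRes A t).complex.linearYonedaObj A (ModuleCat.of A C)).ExactAt 1) := by
    rw [HomologicalComplex.exactAt_iff_isZero_homology]
    exact ⟨fun h => @ModuleCat.isZero_of_subsingleton _ _ _ h, fun h => subsingleton_of_isZero A h⟩
  refine Iff.trans h2 ?_
  rw [HomologicalComplex.exactAt_iff' _ 0 1 2 (by simp) (by simp)]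
  refine Iff.trans (ShortComplex.moduleCat_exact_iff _) ?_
  rw [← surj_comp_iff A t C]
  dsimp [HomologicalComplex.sc', HomologicalComplex.shortComplexFunctor',
    ChainComplex.linearYonedaObj]
  have hc : (teleRes A t).complex = teleComplex A t := rfl
  rw [hc]
  constructor
  · intro h φ
    obtain ⟨ψ, hψ⟩ := h (ModuleCat.ofHom φ) (by
      change (teleComplex A t).d 2 1 ≫ ModuleCat.ofHom φ = 0
      rw [teleComplex_d_succ A t 0]; exact Limits.zero_comp)
    refine ⟨ψ.hom, ?_⟩
    have hψ' : (teleComplex A t).d 1 0 ≫ ψ = ModuleCat.ofHom φ := hψ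
    rw [teleComplex_d_1_0] at hψ'
    exact congrArg ModuleCat.Hom.hom hψ'
  · intro h φ _
    obtain ⟨ψ, hψ⟩ := h φ.hom
    refine ⟨ModuleCat.ofHom ψ, ?_⟩
    change (teleComplex A t).d 1 0 ≫ ModuleCat.ofHom ψ = φ
    rw [teleComplex_d_1_0]
    exact ModuleCat.hom_ext hψ

end ExtIff

/-- For a homomorphism of commutative rings `R → S`, the underlying
`R`-module (restriction of scalars) of any contraadjusted `S`-module is contraadjusted. -/
theorem contraadjusted_restriction_of_scalars (R S : Type) [CommRing R] [CommRing S]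
    [Algebra R S] (C : Type) [AddCommGroup C] [Module S C] [Module R C]
    [IsScalarTower R S C] (hC : Contraadjusted S C) :
    Contraadjusted R C := by
  intro t
  rw [subsingleton_ext_iff R t C]
  have heq : (fun (b : ℕ → C) (n : ℕ) => b n - t • b (n+1))
      = (fun (b : ℕ → C) (n : ℕ) => b n - (algebraMap R S t) • b (n+1)) := by
    funext b n
    rw [algebraMap_smul]
  rw [heq]
  exact (subsingleton_ext_iff S (algebraMap R S t) C).mp (hC (algebraMap R S t))
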